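/- arXiv:1805.10613 — 2 statements merged into one kernel-verified Lean document; each statement's English description precedes it below -/
import Mathlib

section
/- Let p be a prime, s ≥ 1, and consider the ring B_s = (ℤ_(p)[v]/(v^{s+1}, pv))[y_1, ..., y_s]/(y_1^p, ..., y_s^p). In the subring A_s generated by the elements p y_i^j and v y_i^j (1 ≤ i ≤ s, 1 ≤ j ≤ p−1), the element x = (v y_1)(v y_2)⋯(v y_s) = v^s y_1 y_2 ⋯ y_s is a nonzero torsion element lying in T^s, where T is the torsion ideal of A_s; in particular T^s ≠ 0. -/
/-!
Since `p v = 0`, each `v y_i` is an additive torsion element of `A_s`, so their product lies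
in `T^s`. The product `v^s y_1⋯y_s` is nonzero: `v^s ∉ (v^{s+1}, p v)` because reducing
coefficients modulo the non-unit `p` of `ℤ_(p)` turns this ideal into `(v^{s+1})`, and
`y_1⋯y_s` is a monomial with all exponents below `p`, hence outside the monomial ideal
`(y_1^p, …, y_s^p)`.
-/

noncomputable section

open scoped Classical

/-- The ideal `(p) ⊆ ℤ` is prime. -/
instance zp_isPrime (p : ℕ) [Fact p.Prime] : (Ideal.span {(p : ℤ)}).IsPrime :=
  (Ideal.span_singleton_prime (by exact_mod_cast (Fact.out : p.Prime).ne_zero)).mpr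
    (Nat.prime_iff_prime_int.mp (Fact.out : p.Prime))

/-- `ℤ_(p)`, the integers localized at the prime `p`. -/
def Zp (p : ℕ) [Fact p.Prime] : Type :=
  Localization.AtPrime (Ideal.span {(p : ℤ)})

instance (p : ℕ) [Fact p.Prime] : CommRing (Zp p) :=
  inferInstanceAs (CommRing (Localization.AtPrime (Ideal.span {(p : ℤ)})))

set_option synthInstance.maxHeartbeats 1000000
set_option maxHeartbeats 1000000

open MvPolynomial

/-- The coefficient ring `ℤ_(p)[v]/(v^(s+1), pv)`. -/
abbrev Coef10 (p s : ℕ) [Fact p.Prime] : Type :=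
  Polynomial (Zp p) ⧸
    Ideal.span {(Polynomial.X : Polynomial (Zp p)) ^ (s + 1),
      (p : Polynomial (Zp p)) * Polynomial.X}

instance (p s : ℕ) [Fact p.Prime] : CommRing (Coef10 p s) :=
  Ideal.Quotient.commRing _

/-- `B_s = (ℤ_(p)[v]/(v^(s+1), pv))[y_1, ..., y_s]/(y_1^p, ..., y_s^p)`. -/
abbrev B10 (p s : ℕ) [Fact p.Prime] : Type :=
  MvPolynomial (Fin s) (Coef10 p s) ⧸
    Ideal.span (Set.range fun i : Fin s => (X i : MvPolynomial (Fin s) (Coef10 p s)) ^ p)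

/-- The class of `y_i` in `B_s`. -/
def y10 (p s : ℕ) [Fact p.Prime] (i : Fin s) : B10 p s :=
  Ideal.Quotient.mk _ (X i : MvPolynomial (Fin s) (Coef10 p s))

/-- The class of `v` in `B_s`. -/
def v10 (p s : ℕ) [Fact p.Prime] : B10 p s :=
  Ideal.Quotient.mk _
    (C (Ideal.Quotient.mk _ (Polynomial.X : Polynomial (Zp p))) :
      MvPolynomial (Fin s) (Coef10 p s))

/-- `A_s ⊆ B_s`: the `ℤ_(p)`-subalgebra generated by the `p y_i^j` and `v y_i^j`. -/
def A10 (p s : ℕ) [Fact p.Prime] : Subalgebra (Zp p) (B10 p s) :=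
  Algebra.adjoin (Zp p)
    {x | ∃ (i : Fin s) (j : ℕ), 1 ≤ j ∧ j ≤ p - 1 ∧
      (x = (p : B10 p s) * y10 p s i ^ j ∨ x = v10 p s * y10 p s i ^ j)}

/-- The torsion ideal `T` of `A_s`: the ideal generated by all additive torsion elements. -/
def T10 (p s : ℕ) [Fact p.Prime] : Ideal (A10 p s) :=
  Ideal.span {a : A10 p s | ∃ m : ℤ, m ≠ 0 ∧ m • a = 0}

theorem Polynomial.X_pow_notMem_span_X_pow_succ_C_mul_X {R : Type*} [CommRing R] {c : R}
    (hc : ¬IsUnit c) (n : ℕ) :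
    (Polynomial.X : Polynomial R) ^ n ∉
      Ideal.span {Polynomial.X ^ (n + 1), Polynomial.C c * Polynomial.X} := by
  have : Nontrivial (R ⧸ Ideal.span {c}) :=
    Ideal.Quotient.nontrivial_iff.mpr (mt Ideal.span_singleton_eq_top.mp hc)
  intro hmem
  have hmap := Ideal.mem_map_of_mem
    (Polynomial.mapRingHom (Ideal.Quotient.mk (Ideal.span {c}))) hmem
  simp only [Ideal.map_span, Set.image_pair, Polynomial.coe_mapRingHom, Polynomial.map_pow,
    Polynomial.map_X, Polynomial.map_mul, Polynomial.map_C, Ideal.Quotient.mk_singleton_self,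
    map_zero, zero_mul, Set.pair_comm _ (0 : Polynomial _), Ideal.span_insert_zero,
    Ideal.mem_span_singleton, Polynomial.X_pow_dvd_iff] at hmap
  simpa using hmap n n.lt_succ_self

theorem MvPolynomial.monomial_notMem_span_X_pow {σ R : Type*} [CommSemiring R] {n : ℕ}
    {d : σ →₀ ℕ} {c : R} (hc : c ≠ 0) (hd : ∀ i, d i < n) :
    monomial d c ∉ Ideal.span (Set.range fun i => (X i : MvPolynomial σ R) ^ n) := by
  simp_rw [X_pow_eq_monomial]
  rw [Set.range_comp' (fun d => monomial d (1 : R)), mem_ideal_span_monomial_image]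
  simp only [support_monomial, if_neg hc, Finset.mem_singleton, forall_eq, Set.mem_range,
    exists_exists_eq_and, Finsupp.single_le_iff, not_exists, not_le]
  exact hd

theorem Zp.natCast_not_isUnit (p : ℕ) [Fact p.Prime] : ¬IsUnit (p : Zp p) := by
  change ¬IsUnit ((p : ℕ) : Localization.AtPrime (Ideal.span {(p : ℤ)}))
  rw [← map_natCast (algebraMap ℤ (Localization.AtPrime (Ideal.span {(p : ℤ)}))) p,
    IsLocalization.AtPrime.isUnit_to_map_iff _ (Ideal.span {(p : ℤ)})]
  exact not_not.mpr (Ideal.mem_span_singleton_self _)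

theorem Coef10.X_pow_ne_zero (p s : ℕ) [Fact p.Prime] :
    (Ideal.Quotient.mk _ Polynomial.X : Coef10 p s) ^ s ≠ 0 := by
  rw [← map_pow, Ne, Ideal.Quotient.eq_zero_iff_mem, ← Polynomial.C_eq_natCast]
  exact Polynomial.X_pow_notMem_span_X_pow_succ_C_mul_X (Zp.natCast_not_isUnit p) s

theorem natCast_mul_v10 (p s : ℕ) [Fact p.Prime] : (p : B10 p s) * v10 p s = 0 := by
  have hpv : (p : Coef10 p s) * Ideal.Quotient.mk _ Polynomial.X = 0 := by
    rw [← map_natCast (Ideal.Quotient.mk _), ← map_mul, Ideal.Quotient.eq_zero_iff_mem]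
    exact Ideal.subset_span (by simp)
  rw [v10, ← map_natCast (Ideal.Quotient.mk _), ← map_mul, ← map_natCast C, ← map_mul, hpv,
    map_zero, map_zero]

theorem v10_pow_mul_prod_y10_ne_zero (p s : ℕ) [Fact p.Prime] :
    v10 p s ^ s * ∏ i, y10 p s i ≠ 0 := by
  have hmonomial : v10 p s ^ s * ∏ i, y10 p s i = Ideal.Quotient.mk _
      (monomial (Finsupp.indicator Finset.univ fun _ _ => 1)
        ((Ideal.Quotient.mk _ Polynomial.X : Coef10 p s) ^ s)) := by
    rw [← mul_one ((Ideal.Quotient.mk _ Polynomial.X : Coef10 p s) ^ s), ← C_mul_monomial,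
      ← prod_X_pow (fun _ => 1) Finset.univ]
    simp only [v10, y10, pow_one, map_mul, map_pow, map_prod]
  rw [hmonomial, Ne, Ideal.Quotient.eq_zero_iff_mem]
  exact monomial_notMem_span_X_pow (Coef10.X_pow_ne_zero p s)
    fun i => by simpa using (Fact.out : p.Prime).one_lt

theorem v10_mul_y10_mem_A10 (p s : ℕ) [Fact p.Prime] (i : Fin s) :
    v10 p s * y10 p s i ∈ A10 p s :=
  Algebra.subset_adjoin ⟨i, 1, le_rfl, Nat.le_sub_one_of_lt (Fact.out : p.Prime).one_lt,
    Or.inr (by rw [pow_one])⟩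

theorem natCast_zsmul_v10_mul (p s : ℕ) [Fact p.Prime] (b : B10 p s) :
    (p : ℤ) • (v10 p s * b) = 0 := by
  rw [natCast_zsmul, nsmul_eq_mul, ← mul_assoc, natCast_mul_v10, zero_mul]

/-- for `s ≥ 1`, the element `x = (v y_1)(v y_2)⋯(v y_s) = v^s y_1⋯y_s`
is a nonzero `p`-torsion element of `A_s` lying in `T^s`; in particular `T^s ≠ 0`. -/
theorem statement10 (p s : ℕ) [Fact p.Prime] (hs : 1 ≤ s) :
    (∏ i : Fin s, (v10 p s * y10 p s i)) = v10 p s ^ s * ∏ i : Fin s, y10 p s i ∧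
    (∏ i : Fin s, (v10 p s * y10 p s i)) ≠ 0 ∧
    (p : ℤ) • (∏ i : Fin s, (v10 p s * y10 p s i)) = 0 ∧
    (∀ i : Fin s, v10 p s * y10 p s i ∈ A10 p s ∧
      (∃ m : ℤ, m ≠ 0 ∧ m • (v10 p s * y10 p s i) = 0)) ∧
    (∃ hx : (∏ i : Fin s, (v10 p s * y10 p s i)) ∈ A10 p s,
      (⟨_, hx⟩ : A10 p s) ∈ T10 p s ^ s) ∧
    T10 p s ^ s ≠ ⊥ := by
  have hp : (p : ℤ) ≠ 0 := by exact_mod_cast (Fact.out : p.Prime).ne_zero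
  have hfactor : ∏ i : Fin s, (v10 p s * y10 p s i) = v10 p s ^ s * ∏ i : Fin s, y10 p s i := by
    rw [Finset.prod_mul_distrib, Fin.prod_const]
  have hne := hfactor ▸ v10_pow_mul_prod_y10_ne_zero p s
  let t : Fin s → A10 p s := fun i => ⟨_, v10_mul_y10_mem_A10 p s i⟩
  have hcoe : ((∏ i, t i : A10 p s) : B10 p s) = ∏ i, (v10 p s * y10 p s i) :=
    map_prod (A10 p s).val t Finset.univ
  have htT : ∀ i, t i ∈ T10 p s := fun i => Ideal.subset_span
    (⟨p, hp, Subtype.ext (natCast_zsmul_v10_mul p s _)⟩ : ∃ m : ℤ, m ≠ 0 ∧ m • t i = 0)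
  have hT : ∏ i, t i ∈ T10 p s ^ s := by
    simpa only [Finset.prod_const, Finset.card_univ, Fintype.card_fin] using
      Ideal.prod_mem_prod (s := Finset.univ) (I := fun _ => T10 p s) (x := t)
      fun i _ => htT i
  refine ⟨hfactor, hne, ?_,
    fun i => ⟨v10_mul_y10_mem_A10 p s i, p, hp, natCast_zsmul_v10_mul p s _⟩,
    ⟨hcoe ▸ (∏ i, t i).2, by convert hT; exact hcoe.symm⟩, ?_⟩
  · obtain ⟨b, hb⟩ := Finset.dvd_prod_of_mem (fun i => v10 p s * y10 p s i)
      (Finset.mem_univ (⟨0, hs⟩ : Fin s))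
    rw [hb, mul_assoc]
    exact natCast_zsmul_v10_mul p s _
  · intro hbot
    rw [hbot, Ideal.mem_bot] at hT
    exact hne (hcoe ▸ congrArg Subtype.val hT)
end
end

section
/- Let A = ℤ_(2)[h, c_1, ..., c_{n-1}]/(h^{d+1}, h^{d_i} c_i, 2c_i, c_i c_j : 1 ≤ i, j ≤ n−1) for integers d ≥ 1 and d_1 ≥ ... ≥ d_{n-1} ≥ 1. Then the set T of torsion elements of A is the ideal generated by c_1, ..., c_{n-1}, and T² = 0. -/
noncomputable section

open scoped Classical

open MvPolynomial

/-! The relations lie in the monomial ideal `J = (c_i, h^(d+1))`, and `J` lies in `(c_i)` plus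
the relations. Over the torsion-free ring `ℤ_(2)`, multiplying a polynomial by a nonzero integer
does not change its support, so `m • p ∈ J` forces `p ∈ J`: a torsion element of `A` therefore
lifts to `J` and lies in the image of `(c_i)`. Conversely `2 c_i` and `c_i c_j` are relations,
so `(c_i)` is killed by `2` and squares to zero. -/

instance Zp.instIsAddTorsionFree (p : ℕ) [Fact p.Prime] : IsAddTorsionFree (Zp p) :=
  have : CharZero (Localization.AtPrime (Ideal.span {(p : ℤ)})) :=
    charZero_of_injective_algebraMap
      (IsLocalization.injective _ (Ideal.span {(p : ℤ)}).primeCompl_le_nonZeroDivisors)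
  inferInstanceAs (IsAddTorsionFree (Localization.AtPrime (Ideal.span {(p : ℤ)})))

theorem MvPolynomial.mem_ideal_span_monomial_image_of_smul_mem {σ R S : Type*} [CommSemiring R]
    [Semiring S] [IsDomain S] [Module S R] [Module.IsTorsionFree S R] {s : Set (σ →₀ ℕ)}
    {a : S} (ha : a ≠ 0) {p : MvPolynomial σ R}
    (h : a • p ∈ Ideal.span ((fun s => monomial s (1 : R)) '' s)) :
    p ∈ Ideal.span ((fun s => monomial s (1 : R)) '' s) := by
  rw [mem_ideal_span_monomial_image] at h ⊢
  rwa [support_smul_eq ha] at h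

section QuotientTorsion

variable {A : Type*} [CommRing A] {rel I J : Ideal A}

theorem Ideal.mem_map_mk_of_zsmul_eq_zero {m : ℤ} (hsat : ∀ p : A, m • p ∈ J → p ∈ J)
    (hrel : rel ≤ J) (hJ : J ≤ I ⊔ rel) {x : A ⧸ rel} (hx : m • x = 0) :
    x ∈ I.map (Ideal.Quotient.mk rel) := by
  obtain ⟨p, rfl⟩ := Ideal.Quotient.mk_surjective x
  have hmp : m • p ∈ rel := by
    rwa [← Ideal.Quotient.eq_zero_iff_mem, map_zsmul]
  rw [Ideal.mem_quotient_iff_mem_sup]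
  exact hJ (hsat p (hrel hmp))

theorem Ideal.zsmul_eq_zero_of_mem_map_mk {m : ℤ} (h : Ideal.span {(m : A)} * I ≤ rel)
    {x : A ⧸ rel} (hx : x ∈ I.map (Ideal.Quotient.mk rel)) : m • x = 0 := by
  have hmem : (m : A ⧸ rel) * x ∈ (Ideal.span {(m : A)} * I).map (Ideal.Quotient.mk rel) := by
    rw [Ideal.map_mul]
    refine Ideal.mul_mem_mul ?_ hx
    rw [← map_intCast (Ideal.Quotient.mk rel)]
    exact Ideal.mem_map_of_mem _ (Ideal.mem_span_singleton_self _)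
  have hbot := Ideal.map_mono (f := Ideal.Quotient.mk rel) h
  rw [Ideal.map_quotient_self] at hbot
  rw [zsmul_eq_mul]
  exact (Submodule.mem_bot _).mp (hbot hmem)

end QuotientTorsion

namespace TruncatedPolynomialAlgebra

variable (R : Type*) [CommRing R] (n : ℕ) [NeZero n] (d : ℕ) (dd : Fin n → ℕ)

/-- `h = X 0` and `c_i = X i` for `i ≠ 0`. -/
def relations : Ideal (MvPolynomial (Fin n) R) :=
  Ideal.span
    ({(X 0 : MvPolynomial (Fin n) R) ^ (d + 1)} ∪
     {x | ∃ i : Fin n, i ≠ 0 ∧ x = (X 0) ^ (dd i) * X i} ∪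
     {x | ∃ i : Fin n, i ≠ 0 ∧ x = 2 * X i} ∪
     {x | ∃ i j : Fin n, i ≠ 0 ∧ j ≠ 0 ∧ x = X i * X j})

def cIdeal : Ideal (MvPolynomial (Fin n) R) :=
  Ideal.span (X '' {i : Fin n | i ≠ 0})

/-- `(c_i, h^(d+1))` -/
def monomialIdeal : Ideal (MvPolynomial (Fin n) R) :=
  Ideal.span ((fun s => monomial s (1 : R)) ''
    ((fun i : Fin n => Finsupp.single i 1) '' {i | i ≠ 0} ∪ {Finsupp.single 0 (d + 1)}))

variable {R n d dd}

theorem map_mk_cIdeal (rel : Ideal (MvPolynomial (Fin n) R)) :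
    (cIdeal R n).map (Ideal.Quotient.mk rel) =
      Ideal.span ((fun i => Ideal.Quotient.mk rel (X i)) '' {i : Fin n | i ≠ 0}) := by
  rw [cIdeal, Ideal.map_span, Set.image_image]

theorem X_mem_monomialIdeal {i : Fin n} (hi : i ≠ 0) :
    (X i : MvPolynomial (Fin n) R) ∈ monomialIdeal R n d :=
  Ideal.subset_span ⟨Finsupp.single i 1, Or.inl ⟨i, hi, rfl⟩, rfl⟩

theorem X_zero_pow_mem_monomialIdeal :
    (X 0 : MvPolynomial (Fin n) R) ^ (d + 1) ∈ monomialIdeal R n d :=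
  Ideal.subset_span ⟨Finsupp.single 0 (d + 1), Or.inr rfl, X_pow_eq_monomial.symm⟩

theorem relations_le_monomialIdeal : relations R n d dd ≤ monomialIdeal R n d := by
  refine Ideal.span_le.mpr ?_
  rintro x (((rfl | ⟨i, hi, rfl⟩) | ⟨i, hi, rfl⟩) | ⟨i, j, -, hj, rfl⟩)
  · exact X_zero_pow_mem_monomialIdeal
  · exact Ideal.mul_mem_left _ _ (X_mem_monomialIdeal hi)
  · exact Ideal.mul_mem_left _ _ (X_mem_monomialIdeal hi)
  · exact Ideal.mul_mem_left _ _ (X_mem_monomialIdeal hj)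

theorem monomialIdeal_le_cIdeal_sup_relations :
    monomialIdeal R n d ≤ cIdeal R n ⊔ relations R n d dd := by
  refine Ideal.span_le.mpr ?_
  rintro x ⟨s, ⟨i, hi, rfl⟩ | rfl, rfl⟩
  · exact Ideal.mem_sup_left (Ideal.subset_span ⟨i, hi, rfl⟩)
  · refine Ideal.mem_sup_right (Ideal.subset_span ?_)
    exact Or.inl (Or.inl (Or.inl X_pow_eq_monomial.symm))

theorem span_two_mul_cIdeal_le_relations :
    Ideal.span {((2 : ℤ) : MvPolynomial (Fin n) R)} * cIdeal R n ≤ relations R n d dd := by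
  rw [cIdeal, Ideal.span_mul_span', Ideal.span_le]
  rintro x ⟨a, rfl, b, ⟨i, hi, rfl⟩, rfl⟩
  refine Ideal.subset_span (Or.inl (Or.inr ⟨i, hi, ?_⟩))
  rw [Int.cast_ofNat]

theorem cIdeal_mul_self_le_relations :
    cIdeal R n * cIdeal R n ≤ relations R n d dd := by
  rw [cIdeal, Ideal.span_mul_span', Ideal.span_le]
  rintro x ⟨a, ⟨i, hi, rfl⟩, b, ⟨j, hj, rfl⟩, rfl⟩
  exact Ideal.subset_span (Or.inr ⟨i, j, hi, hj, rfl⟩)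

end TruncatedPolynomialAlgebra

open TruncatedPolynomialAlgebra in
theorem statement12_general (n : ℕ) [NeZero n] (d : ℕ)
    (dd : Fin n → ℕ) :
    ∀ rel : Ideal (MvPolynomial (Fin n) (Zp 2)),
      rel = Ideal.span
        ({(X 0 : MvPolynomial (Fin n) (Zp 2)) ^ (d + 1)} ∪
         {x | ∃ i : Fin n, i ≠ 0 ∧ x = (X 0) ^ (dd i) * X i} ∪
         {x | ∃ i : Fin n, i ≠ 0 ∧ x = 2 * X i} ∪
         {x | ∃ i j : Fin n, i ≠ 0 ∧ j ≠ 0 ∧ x = X i * X j}) →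
      ∀ T : Ideal (MvPolynomial (Fin n) (Zp 2) ⧸ rel),
        T = Ideal.span ((fun i => Ideal.Quotient.mk rel (X i)) '' {i : Fin n | i ≠ 0}) →
        (∀ x : MvPolynomial (Fin n) (Zp 2) ⧸ rel,
          (∃ m : ℤ, m ≠ 0 ∧ m • x = 0) ↔ x ∈ T) ∧
        T ^ 2 = ⊥ := by
  rintro _ rfl T rfl
  rw [← map_mk_cIdeal]
  refine ⟨fun x => ⟨fun ⟨m, hm, hmx⟩ => ?_, fun hx => ⟨2, two_ne_zero, ?_⟩⟩, ?_⟩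
  · exact Ideal.mem_map_mk_of_zsmul_eq_zero
      (fun _ => mem_ideal_span_monomial_image_of_smul_mem hm) relations_le_monomialIdeal
      monomialIdeal_le_cIdeal_sup_relations hmx
  · exact Ideal.zsmul_eq_zero_of_mem_map_mk span_two_mul_cIdeal_le_relations hx
  · rw [pow_two, ← Ideal.map_mul, Ideal.map_eq_bot_iff_le_ker, Ideal.mk_ker]
    exact cIdeal_mul_self_le_relations

/-- let `A = ℤ_(2)[h, c_1, ..., c_(n-1)]/(h^(d+1), h^(d_i) c_i, 2c_i, c_i c_j)`
with `d ≥ 1` and `d_1 ≥ ... ≥ d_(n-1) ≥ 1`.  Then the torsion elements of `A` form exactly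
the ideal `T` generated by `c_1, ..., c_(n-1)`, and `T² = 0`.  (Here `h = X 0`, `c_k = X k`
for `k ≠ 0`.) -/
theorem statement12 (n : ℕ) [NeZero n] (hn : 2 ≤ n) (d : ℕ) (hd : 1 ≤ d)
    (dd : Fin n → ℕ) (hdd1 : ∀ i : Fin n, i ≠ 0 → 1 ≤ dd i)
    (hdd2 : ∀ i j : Fin n, i ≠ 0 → j ≠ 0 → i ≤ j → dd j ≤ dd i) :
    ∀ rel : Ideal (MvPolynomial (Fin n) (Zp 2)),
      rel = Ideal.span
        ({(X 0 : MvPolynomial (Fin n) (Zp 2)) ^ (d + 1)} ∪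
         {x | ∃ i : Fin n, i ≠ 0 ∧ x = (X 0) ^ (dd i) * X i} ∪
         {x | ∃ i : Fin n, i ≠ 0 ∧ x = 2 * X i} ∪
         {x | ∃ i j : Fin n, i ≠ 0 ∧ j ≠ 0 ∧ x = X i * X j}) →
      ∀ T : Ideal (MvPolynomial (Fin n) (Zp 2) ⧸ rel),
        T = Ideal.span ((fun i => Ideal.Quotient.mk rel (X i)) '' {i : Fin n | i ≠ 0}) →
        (∀ x : MvPolynomial (Fin n) (Zp 2) ⧸ rel,
          (∃ m : ℤ, m ≠ 0 ∧ m • x = 0) ↔ x ∈ T) ∧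
        T ^ 2 = ⊥ :=
  statement12_general n d dd
end
end
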